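/- Shift identity for the high rank-one transform: let π : [0, s+u] → V be continuous with s > 0, and let (τ_s π)(r) = π(s+r) − π(s). Then for every r with 0 < r ≤ u, (𝒯_α π)(s+r) − (𝒯_α π)(s) = (τ_s π)(r) + log(1 + ξ·∫₀^r e^{−α((τ_s π)(v))} dv)·α^∨, where ξ = e^{−α(π(s))}/∫₀^s e^{−α(π(v))} dv. -/
import Mathlib


open MeasureTheory

/-- The high rank-one transform `(𝒯_α π)(t) = π(t) + log(∫₀^t e^{-α(π(v))} dv)·α^∨`. -/
noncomputable def pathHighT {V : Type*} [NormedAddCommGroup V] [NormedSpace ℝ V]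
    (α : V →ₗ[ℝ] ℝ) (αv : V) (π : ℝ → V) : ℝ → V :=
  fun t => π t + Real.log (∫ v in (0:ℝ)..t, Real.exp (-α (π v))) • αv

/-- The shift `(τ_s π)(r) = π(s + r) - π(s)`. -/
def pathShift {V : Type*} [AddCommGroup V] (s : ℝ) (π : ℝ → V) : ℝ → V :=
  fun r => π (s + r) - π s

/-- Shift identity for the high rank-one transform. -/
theorem pathHighT_shift
    {V : Type*} [NormedAddCommGroup V] [NormedSpace ℝ V] [FiniteDimensional ℝ V]
    (α : V →ₗ[ℝ] ℝ) (αv : V) (hpair : α αv = 2)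
    (s u : ℝ) (hs : 0 < s) (hu : 0 < u)
    (π : ℝ → V) (hπ : ContinuousOn π (Set.Icc 0 (s + u))) :
    ∀ r : ℝ, 0 < r → r ≤ u →
      pathHighT α αv π (s + r) - pathHighT α αv π s =
        pathShift s π r +
          Real.log (1 + (Real.exp (-α (π s)) / ∫ v in (0:ℝ)..s, Real.exp (-α (π v))) *
            ∫ v in (0:ℝ)..r, Real.exp (-α (pathShift s π v))) • αv := by
  intro r hr hru
  set g : ℝ → ℝ := fun v => Real.exp (-α (π v)) with hg
  have hgcont : ContinuousOn g (Set.Icc 0 (s + u)) := by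
    exact Real.continuous_exp.comp_continuousOn
      ((continuous_neg.comp (LinearMap.continuous_of_finiteDimensional α)).comp_continuousOn hπ)
  -- simpler: both a,b in [0, s+u]
  have hsub' : ∀ a b : ℝ, 0 ≤ a → a ≤ s + u → 0 ≤ b → b ≤ s + u →
      IntervalIntegrable g volume a b := by
    intro a b ha ha' hb hb'
    refine (hgcont.mono ?_).intervalIntegrable
    exact Set.uIcc_subset_Icc ⟨ha, ha'⟩ ⟨hb, hb'⟩
  have hsu : s ≤ s + u := le_add_of_nonneg_right hu.le
  have hsr : s + r ≤ s + u := by linarith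
  have hA : IntervalIntegrable g volume 0 s := hsub' 0 s le_rfl (by linarith) hs.le hsu
  have hB : IntervalIntegrable g volume s (s + r) := hsub' s (s + r) hs.le hsu (by linarith) hsr
  set A : ℝ := ∫ v in (0:ℝ)..s, g v with hAdef
  set B : ℝ := ∫ v in s..(s + r), g v with hBdef
  have hApos : 0 < A :=
    intervalIntegral.intervalIntegral_pos_of_pos_on hA
      (fun x _ => Real.exp_pos _) hs
  have hBnn : 0 ≤ B :=
    intervalIntegral.integral_nonneg (by linarith) (fun x _ => (Real.exp_pos _).le)
  have hsplit : (∫ v in (0:ℝ)..(s + r), g v) = A + B :=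
    (intervalIntegral.integral_add_adjacent_intervals hA hB).symm
  -- change of variables for the shifted integral
  have hshift : (∫ v in (0:ℝ)..r, Real.exp (-α (pathShift s π v)))
      = Real.exp (α (π s)) * B := by
    have h1 : ∀ v : ℝ, Real.exp (-α (pathShift s π v))
        = Real.exp (α (π s)) * g (s + v) := by
      intro v
      simp only [pathShift, hg, map_sub, neg_sub]
      rw [← Real.exp_add]
      ring_nf
    rw [intervalIntegral.integral_congr (fun v _ => h1 v),
      intervalIntegral.integral_const_mul,
      intervalIntegral.integral_comp_add_left g s, add_zero]
  have hxi : (1 : ℝ) + (Real.exp (-α (π s)) / A) *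
      (∫ v in (0:ℝ)..r, Real.exp (-α (pathShift s π v))) = (A + B) / A := by
    rw [hshift]
    rw [Real.exp_neg]
    field_simp
  have hABpos : 0 < A + B := by linarith
  have hlog : Real.log ((A + B) / A) = Real.log (A + B) - Real.log A :=
    Real.log_div hABpos.ne' hApos.ne'
  simp only [pathHighT]
  rw [show (fun v => Real.exp (-α (π v))) = g from rfl]
  rw [hsplit, hxi, hlog, sub_smul, pathShift]
  abel
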